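/- For every natural number r there exist real numbers a_1, …, a_ℓ with ℓ = ⌈(r+1)/2⌉ and a natural number N such that, for every homogeneous polynomial f of degree r in two real variables and every n ≥ N, one has S_n(f) = Σ_{j=1}^{ℓ} a_j S_{n−j}(f). Moreover the coefficients a_j depend only on r, not on f. -/

import Mathlib

/-- The Stern array: `stern n k` is the entry `s(n,k)` of the Stern array,
with `s(1,1) = 1`, `s(1,k) = 0` for `k ≠ 1`, and
`s(n,2k) = s(n-1,k)`, `s(n,2k+1) = s(n-1,k) + s(n-1,k+1)`. -/
def stern : ℕ → ℤ → ℕ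
  | 0, _ => 0
  | 1, k => if k = 1 then 1 else 0
  | n + 2, k =>
    if k % 2 = 0 then stern (n + 1) (k / 2)
    else stern (n + 1) ((k - 1) / 2) + stern (n + 1) ((k + 1) / 2)

/-- For a polynomial `f` in two variables,
`S n f = ∑_{k=0}^{2^n - 1} f(s(n,k), s(n,k+1))`. -/
noncomputable def S (n : ℕ) (f : MvPolynomial (Fin 2) ℝ) : ℝ :=
  ∑ k ∈ Finset.range (2 ^ n),
    MvPolynomial.eval ![(stern n (k : ℤ) : ℝ), (stern n ((k : ℤ) + 1) : ℝ)] f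

lemma stern_even (n : ℕ) (k : ℤ) : stern (n + 2) (2 * k) = stern (n + 1) k := by
  have h1 : (2 * k) % 2 = 0 := by omega
  have h2 : (2 * k) / 2 = k := by omega
  simp [stern, h1, h2]

lemma stern_odd (n : ℕ) (k : ℤ) :
    stern (n + 2) (2 * k + 1) = stern (n + 1) k + stern (n + 1) (k + 1) := by
  have h1 : (2 * k + 1) % 2 = 1 := by omega
  have h2 : (2 * k + 1 - 1) / 2 = k := by omega
  have h3 : (2 * k + 1 + 1) / 2 = k + 1 := by omega
  simp [stern, h1, h2, h3]

lemma stern_palindrome : ∀ n : ℕ, 1 ≤ n → ∀ k : ℤ, stern n (2 ^ n - k) = stern n k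
  | 0, h => by omega
  | 1, _ => by
    intro k
    have : ((2:ℤ)^1 - k = 1) ↔ (k = 1) := by omega
    simp only [stern]
    rcases eq_or_ne k 1 with rfl | hk
    · norm_num
    · rw [if_neg (by omega), if_neg hk]
  | n + 2, _ => by
    intro k
    rcases Int.even_or_odd k with ⟨m, hm⟩ | ⟨m, hm⟩
    · have : (2:ℤ) ^ (n + 2) - k = 2 * (2 ^ (n+1) - m) := by rw [hm]; ring
      rw [this, hm, show (m + m : ℤ) = 2 * m by ring, stern_even, stern_even,
        stern_palindrome (n+1) (by omega)]
    · have : (2:ℤ) ^ (n + 2) - k = 2 * (2 ^ (n+1) - (m+1)) + 1 := by rw [hm]; ring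
      rw [this, hm, show (2*m+1 : ℤ) = 2*m+1 by ring, stern_odd, stern_odd,
        stern_palindrome (n+1) (by omega) (m+1),
        show (2:ℤ)^(n+1) - (m+1) + 1 = 2^(n+1) - m by ring,
        stern_palindrome (n+1) (by omega) m, Nat.add_comm]

open MvPolynomial

noncomputable section SternAux

abbrev P2 := MvPolynomial (Fin 2) ℝ

def A1 : P2 →ₐ[ℝ] P2 := aeval ![X 0, X 0 + X 1]
def A2 : P2 →ₐ[ℝ] P2 := aeval ![X 0 + X 1, X 1]
def T : P2 →ₗ[ℝ] P2 := A1.toLinearMap + A2.toLinearMap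
def σP : P2 →ₐ[ℝ] P2 := rename (Equiv.swap (0 : Fin 2) 1)

lemma σP_σP (f : P2) : σP (σP f) = f := by
  simp only [σP, rename_rename]
  rw [show ((Equiv.swap (0:Fin 2) 1) ∘ (Equiv.swap (0:Fin 2) 1)) = id from by
    ext x; simp, rename_id]
  rfl

lemma hg1 : ∀ i, (![(X 0 : P2), X 0 + X 1] i).IsHomogeneous 1 := by
  intro i
  fin_cases i
  · exact isHomogeneous_X _ _
  · exact (isHomogeneous_X _ _).add (isHomogeneous_X _ _)

lemma hg2 : ∀ i, (![(X 0 : P2) + X 1, X 1] i).IsHomogeneous 1 := by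
  intro i
  fin_cases i
  · exact (isHomogeneous_X _ _).add (isHomogeneous_X _ _)
  · exact isHomogeneous_X _ _

lemma T_σP (f : P2) : T (σP f) = σP (T f) := by
  have h1 : A1 (σP f) = aeval ![X 0 + X 1, X 0] f := by
    rw [A1, σP, aeval_rename,
      show (![(X 0 : P2), X 0 + X 1] ∘ ⇑(Equiv.swap (0:Fin 2) 1)) = ![X 0 + X 1, X 0] from
        funext fun i => by fin_cases i <;> simp [Equiv.swap_apply_left, Equiv.swap_apply_right]]
  have h2 : A2 (σP f) = aeval ![X 1, X 0 + X 1] f := by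
    rw [A2, σP, aeval_rename,
      show (![(X 0 : P2) + X 1, X 1] ∘ ⇑(Equiv.swap (0:Fin 2) 1)) = ![X 1, X 0 + X 1] from
        funext fun i => by fin_cases i <;> simp [Equiv.swap_apply_left, Equiv.swap_apply_right,
          add_comm]]
  have h3 : σP (A1 f) = aeval ![X 1, X 0 + X 1] f := by
    rw [A1, show σP (aeval ![X 0, X 0 + X 1] f) = (σP.comp (aeval ![X 0, X 0 + X 1])) f from rfl,
      comp_aeval,
      show (fun i => σP (![(X 0 : P2), X 0 + X 1] i)) = ![X 1, X 0 + X 1] from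
        funext fun i => by fin_cases i <;> simp [σP, Equiv.swap_apply_left,
          Equiv.swap_apply_right, add_comm]]
  have h4 : σP (A2 f) = aeval ![X 0 + X 1, X 0] f := by
    rw [A2, show σP (aeval ![X 0 + X 1, X 1] f) = (σP.comp (aeval ![X 0 + X 1, X 1])) f from rfl,
      comp_aeval,
      show (fun i => σP (![(X 0 : P2) + X 1, X 1] i)) = ![X 0 + X 1, X 0] from
        funext fun i => by fin_cases i <;> simp [σP, Equiv.swap_apply_left,
          Equiv.swap_apply_right, add_comm]]
  simp only [T, LinearMap.add_apply, AlgHom.toLinearMap_apply, map_add, h1, h2, h3, h4]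
  ring

lemma σP_isHomogeneous {f : P2} {r : ℕ} (hf : f.IsHomogeneous r) : (σP f).IsHomogeneous r :=
  hf.rename_isHomogeneous

lemma T_isHomogeneous {f : P2} {r : ℕ} (hf : f.IsHomogeneous r) : (T f).IsHomogeneous r := by
  have h1 := hf.aeval _ hg1
  have h2 := hf.aeval _ hg2
  rw [one_mul] at h1 h2
  exact h1.add h2

/-! ### `S` as a linear map -/

def Slin (n : ℕ) : P2 →ₗ[ℝ] ℝ :=
  ∑ k ∈ Finset.range (2 ^ n),
    (aeval (R := ℝ) ![(stern n (k : ℤ) : ℝ), (stern n ((k : ℤ) + 1) : ℝ)]).toLinearMap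

lemma aeval_eq_eval (v : Fin 2 → ℝ) (p : P2) : aeval v p = eval v p := rfl

lemma S_eq_Slin (n : ℕ) (f : P2) : S n f = Slin n f := by
  rw [S, Slin, LinearMap.sum_apply]
  exact Finset.sum_congr rfl fun k _ => rfl

lemma eval_aeval (v : Fin 2 → ℝ) (g : Fin 2 → P2) (f : P2) :
    eval v (aeval g f) = eval (fun i => eval v (g i)) f := by
  rw [← aeval_eq_eval, show (aeval v) (aeval g f) = ((aeval v).comp (aeval g)) f from rfl,
    comp_aeval, aeval_eq_eval]
  rfl

lemma eval_T (x y : ℝ) (f : P2) :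
    eval ![x, y] (T f) = eval ![x, x + y] f + eval ![x + y, y] f := by
  have e1 : eval ![x, y] (A1 f) = eval ![x, x + y] f := by
    rw [A1, eval_aeval,
      show (fun i => eval ![x, y] (![(X 0 : P2), X 0 + X 1] i)) = ![x, x + y] from
        funext fun i => by fin_cases i <;> simp]
  have e2 : eval ![x, y] (A2 f) = eval ![x + y, y] f := by
    rw [A2, eval_aeval,
      show (fun i => eval ![x, y] (![(X 0 : P2) + X 1, X 1] i)) = ![x + y, y] from
        funext fun i => by fin_cases i <;> simp]
  simp only [T, LinearMap.add_apply, AlgHom.toLinearMap_apply, map_add, e1, e2]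

lemma sum_range_two_mul (M : ℕ) (g : ℕ → ℝ) :
    ∑ k ∈ Finset.range (2 * M), g k = ∑ m ∈ Finset.range M, (g (2 * m) + g (2 * m + 1)) := by
  induction M with
  | zero => simp
  | succ M ih =>
      rw [show 2 * (M + 1) = (2 * M + 1) + 1 by ring, Finset.sum_range_succ,
        Finset.sum_range_succ, Finset.sum_range_succ, ih]
      ring

lemma S_succ_T (n : ℕ) (hn : 1 ≤ n) (f : P2) : S (n + 1) f = S n (T f) := by
  obtain ⟨p, rfl⟩ : ∃ p, n = p + 1 := ⟨n - 1, by omega⟩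
  rw [S, S, show (2:ℕ) ^ (p + 1 + 1) = 2 * 2 ^ (p + 1) from by ring, sum_range_two_mul]
  refine Finset.sum_congr rfl fun m _ => ?_
  have c1 : ((2 * m : ℕ) : ℤ) = 2 * (m : ℤ) := by push_cast; ring
  have c2 : ((2 * m : ℕ) : ℤ) + 1 = 2 * (m : ℤ) + 1 := by push_cast; ring
  have c3 : ((2 * m + 1 : ℕ) : ℤ) = 2 * (m : ℤ) + 1 := by push_cast; ring
  have c4 : ((2 * m + 1 : ℕ) : ℤ) + 1 = 2 * ((m : ℤ) + 1) := by push_cast; ring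
  rw [c1, c3]
  rw [stern_even p, stern_odd p, show (2 * (m:ℤ) + 1 + 1) = 2 * ((m:ℤ) + 1) by ring,
    stern_even p, eval_T]
  push_cast
  ring

lemma S_T_pow (q : ℕ) (m : ℕ) (hm : 1 ≤ m) (f : P2) : S (m + q) f = S m ((T ^ q) f) := by
  induction q generalizing f with
  | zero => simp
  | succ q ih =>
      rw [show m + (q + 1) = (m + q) + 1 from rfl, S_succ_T _ (by omega), ih (T f), pow_succ]
      rfl

lemma S_σP (n : ℕ) (hn : 1 ≤ n) (f : P2) : S n (σP f) = S n f := by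
  have key : ∀ k : ℕ, eval ![(stern n (k : ℤ) : ℝ), (stern n ((k : ℤ) + 1) : ℝ)] (σP f)
      = eval ![(stern n ((k : ℤ) + 1) : ℝ), (stern n (k : ℤ) : ℝ)] f := by
    intro k
    rw [σP, eval_rename,
      show (![(stern n (k : ℤ) : ℝ), (stern n ((k : ℤ) + 1) : ℝ)] ∘ ⇑(Equiv.swap (0:Fin 2) 1))
          = ![(stern n ((k : ℤ) + 1) : ℝ), (stern n (k : ℤ) : ℝ)] from
        funext fun i => by
          fin_cases i <;> simp [Equiv.swap_apply_left, Equiv.swap_apply_right]]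
  rw [S, S]
  calc ∑ k ∈ Finset.range (2 ^ n),
        eval ![(stern n (k : ℤ) : ℝ), (stern n ((k : ℤ) + 1) : ℝ)] (σP f)
      = ∑ k ∈ Finset.range (2 ^ n),
        eval ![(stern n ((k : ℤ) + 1) : ℝ), (stern n (k : ℤ) : ℝ)] f := by
        exact Finset.sum_congr rfl fun k _ => key k
    _ = ∑ k ∈ Finset.range (2 ^ n),
        eval ![(stern n (((2^n - 1 - k : ℕ) : ℤ) + 1) : ℝ),
          (stern n ((2^n - 1 - k : ℕ) : ℤ) : ℝ)] f := by
        exact (Finset.sum_range_reflect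
          (fun k => eval ![(stern n ((k : ℤ) + 1) : ℝ), (stern n (k : ℤ) : ℝ)] f) (2^n)).symm
    _ = ∑ k ∈ Finset.range (2 ^ n),
        eval ![(stern n (k : ℤ) : ℝ), (stern n ((k : ℤ) + 1) : ℝ)] f := by
        refine Finset.sum_congr rfl fun k hk => ?_
        rw [Finset.mem_range] at hk
        have hM : ((2^n : ℕ) : ℤ) = 2^n := by push_cast; ring
        have e1 : ((2^n - 1 - k : ℕ) : ℤ) + 1 = 2^n - k := by omega
        have e2 : ((2^n - 1 - k : ℕ) : ℤ) = 2^n - ((k : ℤ) + 1) := by omega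
        rw [e1, e2, stern_palindrome n hn, stern_palindrome n hn]

end SternAux

noncomputable section MainProof
open Finsupp

variable (r : ℕ)

/-- exponent pattern -/
def D (i : ℕ) : Fin 2 →₀ ℕ := Finsupp.single 0 i + Finsupp.single 1 (r - i)

lemma D_apply_0 (i : ℕ) : D r i 0 = i := by
  simp [D, Finsupp.single_apply]

lemma D_apply_1 (i : ℕ) : D r i 1 = r - i := by
  simp [D, Finsupp.single_apply]

lemma degree_fin2 (d : Fin 2 →₀ ℕ) : d.degree = d 0 + d 1 := by
  rw [Finsupp.degree_apply,
    Finset.sum_subset (Finset.subset_univ d.support)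
      (fun x _ hx => Finsupp.notMem_support_iff.mp hx), Fin.sum_univ_two]

lemma eq_D_of_degree (m : Fin 2 →₀ ℕ) (hm : m.degree = r) : m = D r (m 0) := by
  have h2 : m 0 + m 1 = r := by rw [← degree_fin2]; exact hm
  ext a
  fin_cases a
  · show m 0 = D r (m 0) 0
    rw [D_apply_0]
  · show m 1 = D r (m 0) 1
    rw [D_apply_1]; omega

/-- the subspace of symmetric homogeneous polynomials of degree `r` -/
def V : Submodule ℝ P2 :=
  (homogeneousSubmodule (Fin 2) ℝ r) ⊓ (LinearMap.ker (σP.toLinearMap - LinearMap.id))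

lemma mem_V {f : P2} : f ∈ V r ↔ f.IsHomogeneous r ∧ σP f = f := by
  simp only [V, Submodule.mem_inf, mem_homogeneousSubmodule, LinearMap.mem_ker,
    LinearMap.sub_apply, LinearMap.id_apply, AlgHom.toLinearMap_apply, sub_eq_zero]

lemma coeff_symm {f : P2} (hs : σP f = f) (i : ℕ) (hi : i ≤ r) :
    coeff (D r (r - i)) f = coeff (D r i) f := by
  have hmap : Finsupp.mapDomain (⇑(Equiv.swap (0 : Fin 2) 1)) (D r i) = D r (r - i) := by
    rw [D, Finsupp.mapDomain_add, Finsupp.mapDomain_single, Finsupp.mapDomain_single,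
      Equiv.swap_apply_left, Equiv.swap_apply_right, D, add_comm]
    congr 2
    omega
  calc coeff (D r (r - i)) f = coeff (Finsupp.mapDomain (⇑(Equiv.swap (0 : Fin 2) 1)) (D r i))
        (σP f) := by rw [hmap, hs]
    _ = coeff (D r i) f := coeff_rename_mapDomain _ (Equiv.injective _) f _

def ℓdim : ℕ := (r + 2) / 2

lemma one_le_ℓdim : 1 ≤ ℓdim r := by unfold ℓdim; omega

/-- coordinates -/
def φcoord : (V r) →ₗ[ℝ] (Fin (ℓdim r) → ℝ) :=
  LinearMap.pi (fun i => (lcoeff ℝ (D r i.val)).comp (V r).subtype)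

lemma φcoord_injective : Function.Injective (φcoord r) := by
  rw [← LinearMap.ker_eq_bot, LinearMap.ker_eq_bot']
  intro x hx
  obtain ⟨f, hf⟩ := x
  rw [mem_V] at hf
  have hco : ∀ i : ℕ, i < ℓdim r → coeff (D r i) f = 0 := by
    intro i hi
    have := congrFun hx ⟨i, hi⟩
    simpa [φcoord, lcoeff] using this
  have hall : ∀ i : ℕ, i ≤ r → coeff (D r i) f = 0 := by
    intro i hi
    by_cases hsmall : i < ℓdim r
    · exact hco i hsmall
    · have h1 : r - i < ℓdim r := by unfold ℓdim at *; omega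
      have h2 : i = r - (r - i) := by omega
      rw [h2, coeff_symm r hf.2 (r - i) (by omega)]
      exact hco _ h1
  have : f = 0 := by
    ext m
    rw [coeff_zero]
    by_cases hdeg : m.degree = r
    · rw [eq_D_of_degree r m hdeg]
      have : m 0 ≤ r := by
        have := degree_fin2 m ▸ hdeg
        omega
      exact hall (m 0) this
    · exact hf.1.coeff_eq_zero hdeg
  exact Subtype.ext this

instance : FiniteDimensional ℝ (V r) :=
  FiniteDimensional.of_injective (φcoord r) (φcoord_injective r)

lemma finrank_V_le : Module.finrank ℝ (V r) ≤ ℓdim r := by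
  have := LinearMap.finrank_le_finrank_of_injective (φcoord_injective r)
  rwa [Module.finrank_fin_fun] at this

lemma T_mem_V {f : P2} (hf : f ∈ V r) : T f ∈ V r := by
  rw [mem_V] at hf ⊢
  exact ⟨T_isHomogeneous hf.1, by rw [← T_σP, hf.2]⟩

def tV : (V r) →ₗ[ℝ] (V r) := T.restrict (fun f hf => T_mem_V r hf)

lemma tV_pow_coe (p : ℕ) (x : V r) : ((((tV r) ^ p) x : V r) : P2) = (T ^ p) (x : P2) := by
  induction p generalizing x with
  | zero => simp
  | succ p ih =>
      rw [pow_succ, pow_succ, Module.End.mul_apply, Module.End.mul_apply, ih ((tV r) x)]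
      rfl

end MainProof

noncomputable section Final

instance (r : ℕ) : Module.Free ℝ (V r) := Module.Free.of_divisionRing ℝ _

open Polynomial in
def qpoly (r : ℕ) : Polynomial ℝ :=
  Polynomial.X ^ (ℓdim r - Module.finrank ℝ (V r)) * (tV r).charpoly

lemma qpoly_monic (r : ℕ) : (qpoly r).Monic :=
  (Polynomial.monic_X_pow _).mul ((tV r).charpoly_monic)

lemma qpoly_natDegree (r : ℕ) : (qpoly r).natDegree = ℓdim r := by
  rw [qpoly, (Polynomial.monic_X_pow _).natDegree_mul ((tV r).charpoly_monic),
    Polynomial.natDegree_X_pow, LinearMap.charpoly_natDegree]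
  have := finrank_V_le r
  omega

lemma qpoly_aeval (r : ℕ) : (Polynomial.aeval (tV r)) (qpoly r) = 0 := by
  rw [qpoly, map_mul, LinearMap.aeval_self_charpoly, mul_zero]

/-- For every `r` there exist reals `a_1, …, a_ℓ` with `ℓ = ⌈(r+1)/2⌉` (depending only
on `r`) and `N` such that for every homogeneous polynomial `f` of degree `r` and every
`n ≥ N`, `S n f = ∑_{j=1}^{ℓ} a_j S (n-j) f`. -/
theorem S_linear_recurrence_sym (r : ℕ) :
    ∃ (a : ℕ → ℝ) (N : ℕ), ∀ f : MvPolynomial (Fin 2) ℝ, f.IsHomogeneous r →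
      ∀ n : ℕ, N ≤ n → S n f = ∑ j ∈ Finset.Icc 1 ((r + 2) / 2), a j * S (n - j) f := by
  refine ⟨fun j => -((qpoly r).coeff (ℓdim r - j)), ℓdim r + 1, ?_⟩
  intro f hf n hn
  have hl : (r + 2) / 2 = ℓdim r := rfl
  rw [hl]
  have hL1 := one_le_ℓdim r
  set g : P2 := (2⁻¹ : ℝ) • (f + σP f) with hgdef
  have hgV : g ∈ V r := by
    rw [mem_V]
    refine ⟨?_, ?_⟩
    · rw [← mem_homogeneousSubmodule]
      exact Submodule.smul_mem _ _ (Submodule.add_mem _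
        ((mem_homogeneousSubmodule _ _).mpr hf)
        ((mem_homogeneousSubmodule _ _).mpr (σP_isHomogeneous hf)))
    · rw [hgdef, map_smul, map_add, σP_σP, add_comm]
  have hSfg : ∀ m, 1 ≤ m → S m g = S m f := by
    intro m hm
    rw [hgdef, S_eq_Slin, map_smul, map_add, smul_eq_mul, ← S_eq_Slin, ← S_eq_Slin,
      S_σP m hm f]
    ring
  set x : (V r) := ⟨g, hgV⟩ with hx
  have h0 : ∑ i ∈ Finset.range (ℓdim r + 1),
      (qpoly r).coeff i • (((tV r) ^ i) x) = (0 : V r) := by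
    have := Polynomial.aeval_eq_sum_range' (p := qpoly r) (n := ℓdim r + 1)
      (by rw [qpoly_natDegree]; omega) (tV r)
    rw [qpoly_aeval] at this
    have h2 := congrFun (congrArg (fun (φ : (V r) →ₗ[ℝ] (V r)) => φ.toFun) this.symm) x
    simpa [LinearMap.sum_apply, LinearMap.smul_apply] using h2
  have h1 : ∑ i ∈ Finset.range (ℓdim r + 1),
      (qpoly r).coeff i • ((T ^ i) g) = (0 : P2) := by
    have h := congrArg (Subtype.val) h0
    rw [Submodule.coe_sum] at h
    simpa [tV_pow_coe] using h
  have h2 : ∑ i ∈ Finset.range (ℓdim r + 1),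
      (qpoly r).coeff i * S (n - ℓdim r) ((T ^ i) g) = (0 : ℝ) := by
    have h := congrArg (Slin (n - ℓdim r)) h1
    rw [map_zero, map_sum] at h
    simp only [map_smul, smul_eq_mul, ← S_eq_Slin] at h
    exact h
  have h3 : ∑ i ∈ Finset.range (ℓdim r + 1),
      (qpoly r).coeff i * S (n - ℓdim r + i) f = (0 : ℝ) := by
    rw [← h2]
    refine Finset.sum_congr rfl fun i hi => ?_
    rw [← S_T_pow i (n - ℓdim r) (by omega) g, hSfg (n - ℓdim r + i) (by omega)]
  rw [Finset.sum_range_succ, (by rw [← qpoly_natDegree r]; exact (qpoly_monic r).coeff_natDegree :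
    (qpoly r).coeff (ℓdim r) = 1), one_mul, (by omega : n - ℓdim r + ℓdim r = n)] at h3
  have hSn : S n f = ∑ i ∈ Finset.range (ℓdim r), (-(qpoly r).coeff i) * S (n - ℓdim r + i) f := by
    have : ∑ i ∈ Finset.range (ℓdim r), (-(qpoly r).coeff i) * S (n - ℓdim r + i) f
        = -∑ i ∈ Finset.range (ℓdim r), (qpoly r).coeff i * S (n - ℓdim r + i) f := by
      rw [← Finset.sum_neg_distrib]
      exact Finset.sum_congr rfl fun i _ => neg_mul _ _
    rw [this]
    linarith
  rw [hSn]
  rw [← Finset.sum_range_reflect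
      (fun i => (-(qpoly r).coeff i) * S (n - ℓdim r + i) f) (ℓdim r)]
  rw [← Finset.Ico_add_one_right_eq_Icc]
  rw [Finset.sum_Ico_eq_sum_range]
  refine Finset.sum_congr (by congr 1 <;> omega) fun i hi => ?_
  rw [Finset.mem_range] at hi
  rw [(by omega : ℓdim r - 1 - i = ℓdim r - (1 + i)),
    (by omega : n - ℓdim r + (ℓdim r - (1 + i)) = n - (1 + i))]

end Final
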